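/- If A ∈ ℝ^{r×r} can be written as A = (J − R)Q where J is skew-symmetric, R is symmetric positive definite, and Q is symmetric positive definite, then every eigenvalue of A has strictly negative real part. -/

import Mathlib

open Matrix

/-- Real part of the complexified quadratic form of a real matrix. -/
lemma re_complex_form {n : ℕ} (M : Matrix (Fin n) (Fin n) ℝ) (x : Fin n → ℂ) :
    (star x ⬝ᵥ (M.map (algebraMap ℝ ℂ)).mulVec x).re =
      (fun i => (x i).re) ⬝ᵥ M.mulVec (fun i => (x i).re) +
      (fun i => (x i).im) ⬝ᵥ M.mulVec (fun i => (x i).im) := by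
  simp only [dotProduct, mulVec, Matrix.map_apply, Pi.star_apply]
  rw [Complex.re_sum, ← Finset.sum_add_distrib]
  refine Finset.sum_congr rfl fun i _ => ?_
  rw [Finset.mul_sum, Complex.re_sum, Finset.mul_sum, Finset.mul_sum,
    ← Finset.sum_add_distrib]
  refine Finset.sum_congr rfl fun j _ => ?_
  simp [Complex.mul_re, Complex.mul_im, Complex.conj_re, Complex.conj_im]

/-- The complexified quadratic form of a real positive definite matrix has
positive real part on nonzero vectors. -/
lemma re_complex_form_pos {n : ℕ} {M : Matrix (Fin n) (Fin n) ℝ} (hM : M.PosDef)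
    (x : Fin n → ℂ) (hx : x ≠ 0) :
    0 < (star x ⬝ᵥ (M.map (algebraMap ℝ ℂ)).mulVec x).re := by
  rw [re_complex_form]
  set a : Fin n → ℝ := fun i => (x i).re with ha
  set b : Fin n → ℝ := fun i => (x i).im with hb
  have hab : a ≠ 0 ∨ b ≠ 0 := by
    by_contra h
    push_neg at h
    apply hx
    funext i
    have h1 := congrFun h.1 i
    have h2 := congrFun h.2 i
    simp only [ha, hb, Pi.zero_apply] at h1 h2
    exact Complex.ext h1 h2
  rcases hab with h | h
  · have := hM.dotProduct_mulVec_pos h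
    have h2 := hM.posSemidef.dotProduct_mulVec_nonneg b
    simp only [star_trivial] at this h2
    linarith
  · have := hM.dotProduct_mulVec_pos h
    have h2 := hM.posSemidef.dotProduct_mulVec_nonneg a
    simp only [star_trivial] at this h2
    linarith

/-- The real quadratic form of a skew-symmetric matrix vanishes. -/
lemma skew_form_zero {n : ℕ} {J : Matrix (Fin n) (Fin n) ℝ} (hJ : Jᵀ = -J)
    (a : Fin n → ℝ) : a ⬝ᵥ J.mulVec a = 0 := by
  have h : a ⬝ᵥ J.mulVec a = -(a ⬝ᵥ J.mulVec a) := by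
    conv_lhs => rw [dotProduct_mulVec, ← mulVec_transpose, hJ, neg_mulVec,
      neg_dotProduct, dotProduct_comm]
  linarith

/-- If `A = (J − R)Q` with `J` skew-symmetric and `R, Q` symmetric positive definite,
then every (complex) eigenvalue of `A` has strictly negative real part. -/
theorem stmt_10 {r : ℕ} (J R Q A : Matrix (Fin r) (Fin r) ℝ)
    (hJ : Jᵀ = -J) (hR : R.PosDef) (hQ : Q.PosDef) (hA : A = (J - R) * Q) :
    ∀ μ : ℂ, Module.End.HasEigenvalue
      (Matrix.toLin' (A.map (algebraMap ℝ ℂ))) μ → μ.re < 0 := by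
  intro μ hμ
  obtain ⟨v, hv⟩ := hμ.exists_hasEigenvector
  have hv0 : v ≠ 0 := hv.2
  have hvA : (A.map (algebraMap ℝ ℂ)).mulVec v = μ • v := by
    have := hv.apply_eq_smul
    rwa [Matrix.toLin'_apply] at this
  set f := algebraMap ℝ ℂ
  set JC := J.map f
  set RC := R.map f
  set QC := Q.map f
  have hAC : A.map f = (JC - RC) * QC := by
    rw [hA]
    rw [Matrix.map_mul, Matrix.map_sub _ (map_sub f)]
  -- w = Q v (complexified)
  set w := QC.mulVec v with hw
  -- q = ⟨v, Q v⟩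
  set q := star v ⬝ᵥ QC.mulVec v with hq
  have hQsymm : Qᵀ = Q := by
    ext i j
    have := congrFun (congrFun hQ.1 i) j
    simpa [conjTranspose_apply] using this
  have hQC_herm : QCᴴ = QC := by
    have h2 : (Q.map f)ᴴ = Qᵀ.map f := by
      ext i j
      simp [conjTranspose_apply, Matrix.map_apply, f]
    rw [show QCᴴ = (Q.map f)ᴴ from rfl, h2, hQsymm]
  -- key identity: star w ⬝ᵥ A v = μ * q
  have key1 : star w ⬝ᵥ (A.map f).mulVec v = μ * q := by
    rw [hvA, dotProduct_smul, smul_eq_mul, hw, star_mulVec, hQC_herm,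
      ← dotProduct_mulVec, hq]
  have key2 : star w ⬝ᵥ (A.map f).mulVec v =
      star w ⬝ᵥ JC.mulVec w - star w ⬝ᵥ RC.mulVec w := by
    rw [hAC, ← mulVec_mulVec, ← hw, sub_mulVec, dotProduct_sub]
  -- real part of skew term is zero
  have hskew : (star w ⬝ᵥ JC.mulVec w).re = 0 := by
    rw [re_complex_form, skew_form_zero hJ, skew_form_zero hJ, add_zero]
  -- q has positive real part
  have hqpos : 0 < q.re := re_complex_form_pos hQ v hv0
  -- q is real (imaginary part zero)
  have hqim : q.im = 0 := by
    have hconj : (starRingEnd ℂ) q = q := by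
      calc (starRingEnd ℂ) q = star (star v ⬝ᵥ QC.mulVec v) := rfl
        _ = star (QC.mulVec v) ⬝ᵥ v := (star_dotProduct _ _).symm
        _ = (star v ᵥ* QCᴴ) ⬝ᵥ v := by rw [star_mulVec]
        _ = star v ⬝ᵥ QCᴴ.mulVec v := (dotProduct_mulVec _ _ _).symm
        _ = q := by rw [hQC_herm]
    exact Complex.conj_eq_iff_im.mp hconj
  -- w ≠ 0 (else q = 0)
  have hw0 : w ≠ 0 := by
    intro h
    rw [hq, ← hw, h, dotProduct_zero] at hqpos
    simp at hqpos
  have hRpos : 0 < (star w ⬝ᵥ RC.mulVec w).re := re_complex_form_pos hR w hw0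
  -- combine
  have := congrArg Complex.re (key1.symm.trans key2)
  rw [Complex.mul_re, hqim, Complex.sub_re, hskew, zero_sub, mul_zero,
    sub_zero] at this
  nlinarith
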